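/- arXiv:1302.1256 — 2 statements merged into one kernel-verified Lean document; each statement's English description precedes it below -/
import Mathlib

section
/- Let F be a field, a_1, …, a_k, b_1, …, b_k pairwise distinct elements of F, P the k×k Cauchy matrix with entries p_{ij} = (a_i − b_j)⁻¹, and Q = P⁻¹ = [q_{ij}]. Then for each pair (i,j), p_{ij}·q_{ji} ≠ 1 if and only if ∏_{ℓ≠i}(b_j − a_ℓ) · ∏_{ℓ≠j}(a_i − b_ℓ) − ∏_{ℓ≠i}(a_i − a_ℓ) · ∏_{ℓ≠j}(b_j − b_ℓ) ≠ 0. -/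
/-!
The inverse of a Cauchy matrix is explicit. Let `N = ∏ ℓ (X - b ℓ)` and `g_m = ∏_{ℓ ≠ m} (X - a ℓ)`.
Since `deg g_m < k`, the barycentric form of Lagrange interpolation at the nodes `b` gives
`∑ j (a i - b j)⁻¹ w_j g_m(b j) = g_m(a i) / N(a i)` with `w_j = ∏_{ℓ ≠ j} (b j - b ℓ)⁻¹`, and the
right-hand side vanishes for `i ≠ m`. Normalising column `m` by `N(a m) / g_m(a m)` yields `Q`.
With `Q` in hand, `p_ij q_ji` is the quotient of the two products in the statement, so it equals `1`
exactly when their difference vanishes.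
-/

open Matrix Finset

namespace Lagrange

open Polynomial

variable {F ι : Type*} [Field F] [DecidableEq ι]

theorem eval_eq_eval_nodal_mul_sum_of_degree_lt {s : Finset ι} {v : ι → F} {f : F[X]} {x : F}
    (hvs : Set.InjOn v s) (hf : f.degree < #s) (hx : ∀ i ∈ s, x ≠ v i) :
    f.eval x = (nodal s v).eval x * ∑ i ∈ s, nodalWeight s v i * (x - v i)⁻¹ * f.eval (v i) := by
  conv_lhs => rw [eq_interpolate hvs hf]
  exact eval_interpolate_not_at_node _ hx

end Lagrange

section CauchyMatrix

open Lagrange Function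

variable {F ι : Type*} [Field F] [Fintype ι] [DecidableEq ι]

theorem prod_erase_sub_ne_zero {v : ι → F} (hv : Injective v) (i : ι) :
    ∏ ℓ ∈ univ.erase i, (v i - v ℓ) ≠ 0 :=
  prod_ne_zero_iff.mpr fun _ hℓ => sub_ne_zero.mpr (hv.ne (ne_of_mem_erase hℓ).symm)

def cauchyMatrix (a b : ι → F) : Matrix ι ι F :=
  of fun i j => (a i - b j)⁻¹

noncomputable def cauchyInv (a b : ι → F) : Matrix ι ι F :=
  of fun j m => nodalWeight univ b j * (nodal (univ.erase m) a).eval (b j) *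
    ((nodal univ b).eval (a m) * nodalWeight univ a m)

variable {a b : ι → F}

theorem cauchyMatrix_mul_cauchyInv (ha : Injective a) (hb : Injective b)
    (hab : ∀ i j, a i ≠ b j) : cauchyMatrix a b * cauchyInv a b = 1 := by
  ext i m
  have hnodes : ∀ j ∈ univ, a i ≠ b j := fun j _ => hab i j
  have hdeg : (nodal (univ.erase m) a).degree < #(univ : Finset ι) := by
    rw [degree_nodal]
    exact_mod_cast card_erase_lt_of_mem (mem_univ m)
  have hbary := eval_eq_eval_nodal_mul_sum_of_degree_lt hb.injOn hdeg hnodes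
  have hentry : (cauchyMatrix a b * cauchyInv a b) i m =
      (nodal (univ.erase m) a).eval (a i) / (nodal univ b).eval (a i) *
        ((nodal univ b).eval (a m) * nodalWeight univ a m) := by
    rw [hbary, mul_div_cancel_left₀ _ (eval_nodal_not_at_node hnodes), mul_apply, sum_mul]
    refine sum_congr rfl fun j _ => ?_
    simp only [cauchyMatrix, cauchyInv, of_apply]
    ring
  rw [hentry]
  rcases eq_or_ne i m with rfl | him
  · have hg : (nodal (univ.erase i) a).eval (a i) ≠ 0 :=
      eval_nodal_not_at_node fun _ hℓ => ha.ne (ne_of_mem_erase hℓ).symm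
    rw [one_apply_eq, nodalWeight_eq_eval_nodal_erase_inv]
    field_simp [hg, eval_nodal_not_at_node hnodes]
  · rw [one_apply_ne him, eval_nodal_at_node (mem_erase.mpr ⟨him, mem_univ i⟩), zero_div,
      zero_mul]

theorem cauchyMatrix_inv (ha : Injective a) (hb : Injective b) (hab : ∀ i j, a i ≠ b j) :
    (cauchyMatrix a b)⁻¹ = cauchyInv a b :=
  inv_eq_right_inv (cauchyMatrix_mul_cauchyInv ha hb hab)

theorem cauchyMatrix_mul_cauchyInv_apply_swap {i j : ι} (hij : a i ≠ b j) :
    cauchyMatrix a b i j * cauchyInv a b j i =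
      (∏ ℓ ∈ univ.erase i, (b j - a ℓ)) * (∏ ℓ ∈ univ.erase j, (a i - b ℓ)) /
        ((∏ ℓ ∈ univ.erase i, (a i - a ℓ)) * (∏ ℓ ∈ univ.erase j, (b j - b ℓ))) := by
  simp only [cauchyMatrix, cauchyInv, of_apply, eval_nodal, nodalWeight, prod_inv_distrib,
    ← mul_prod_erase univ (fun ℓ => a i - b ℓ) (mem_univ j)]
  field_simp [sub_ne_zero.mpr hij]

end CauchyMatrix

/-- For a Cauchy matrix `P` with inverse `Q`, `p_{ij} q_{ji} ≠ 1` iff the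
polynomial expression `∏_{ℓ≠i}(b_j − a_ℓ) ∏_{ℓ≠j}(a_i − b_ℓ) −
∏_{ℓ≠i}(a_i − a_ℓ) ∏_{ℓ≠j}(b_j − b_ℓ)` is nonzero. -/
theorem cauchy_matrix_condition_iff
    {F : Type*} [Field F] {k : ℕ} (a b : Fin k → F)
    (hdist : Function.Injective (Sum.elim a b : Fin k ⊕ Fin k → F)) :
    ∀ i j : Fin k,
      ((Matrix.of fun i j => (a i - b j)⁻¹ : Matrix (Fin k) (Fin k) F) i j *
        (Matrix.of fun i j => (a i - b j)⁻¹ : Matrix (Fin k) (Fin k) F)⁻¹ j i ≠ 1)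
      ↔ ((∏ ℓ ∈ univ.erase i, (b j - a ℓ)) * (∏ ℓ ∈ univ.erase j, (a i - b ℓ)) -
          (∏ ℓ ∈ univ.erase i, (a i - a ℓ)) * (∏ ℓ ∈ univ.erase j, (b j - b ℓ)) ≠ 0) := by
  intro i j
  obtain ⟨ha, hb, hab⟩ := Sum.elim_injective.mp hdist
  change cauchyMatrix a b i j * (cauchyMatrix a b)⁻¹ j i ≠ 1 ↔ _
  rw [cauchyMatrix_inv ha hb hab, cauchyMatrix_mul_cauchyInv_apply_swap (hab i j), ne_eq,
    div_eq_one_iff_eq (mul_ne_zero (prod_erase_sub_ne_zero ha i) (prod_erase_sub_ne_zero hb j)),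
    sub_ne_zero]
end

section
/- Let F be a field, V a nonsingular k×k matrix over F, P a nonsingular k×k matrix over F with entries p_{ij}, U = V·P with columns u_1,…,u_k, V̂ = (Vᵗ)⁻¹ with columns v̂_1,…,v̂_k, and Û = (Uᵗ)⁻¹ with columns û_1,…,û_k. Let X be any k×k matrix over F with columns x_1,…,x_k, let δ, ε ∈ F with δ ≠ 0, set Y = δ V̂ Xᵗ U + ε X P with columns y_1,…,y_k, and let z_i = ∑_{ℓ=1}^k p_{ℓi} x_ℓ. Then for every r with 1 ≤ r ≤ k and every i ∈ {1,…,r}: y_i = δ ∑_{ℓ=1}^k (u_iᵗ x_ℓ) v̂_ℓ + ε (∑_{ℓ=1}^k p_{ℓi} (u_iᵗ x_ℓ)) û_i + ε ∑_{j ∈ {1,…,r}∖{i}} (u_jᵗ z_i) û_j + (ε/δ) ∑_{j=r+1}^{k} ( (u_iᵗ y_j) − ε ∑_{ℓ=1}^k p_{ℓj} (u_iᵗ x_ℓ) ) û_j. -/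
/-!
Put `U = V P` and `M = Uᵀ X P`, so that `M j i = u_jᵗ z_i` and `M i j = ∑_ℓ p_{ℓj} (u_iᵗ x_ℓ)`.
Since `X P = Û M`, the vector `z_i` expands in the dual basis as `z_i = ∑_j (u_jᵗ z_i) û_j`, and
`y_i = δ ∑_ℓ (u_iᵗ x_ℓ) v̂_ℓ + ε z_i`. The coefficients with `j > r` are not exchanged; they are
recovered from `Uᵀ Y = δ Mᵀ + ε M`, i.e. `u_iᵗ y_j = δ (u_jᵗ z_i) + ε M i j`, which is solvable
for `u_jᵗ z_i` because `δ ≠ 0`.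
-/

open Matrix Finset

namespace Matrix

variable {n R : Type*} [Fintype n] [CommSemiring R]

theorem col_dotProduct_col (A B : Matrix n n R) (i j : n) :
    (fun t => A t i) ⬝ᵥ (fun t => B t j) = (Aᵀ * B) i j :=
  rfl

theorem transpose_mul_transpose_apply (A B : Matrix n n R) (i j : n) :
    (Bᵀ * A) i j = (Aᵀ * B) j i := by
  rw [← transpose_apply (Aᵀ * B), transpose_mul, transpose_transpose]

theorem transpose_mul_mul_apply (U X P : Matrix n n R) (j i : n) :
    (Uᵀ * (X * P)) j i = ∑ ℓ, P ℓ i * (Uᵀ * X) j ℓ := by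
  simp only [← Matrix.mul_assoc, mul_apply (N := P), mul_comm]

end Matrix

section Parity

variable {n R : Type*} [Fintype n] [DecidableEq n] [CommRing R]

noncomputable def parityMatrix (V P X : Matrix n n R) (δ ε : R) : Matrix n n R :=
  δ • ((Vᵀ)⁻¹ * Xᵀ * (V * P)) + ε • (X * P)

theorem transpose_mul_parityMatrix {V : Matrix n n R} (hV : IsUnit V.det)
    (P X : Matrix n n R) (δ ε : R) :
    (V * P)ᵀ * parityMatrix V P X δ ε =
      δ • ((V * P)ᵀ * (X * P))ᵀ + ε • ((V * P)ᵀ * (X * P)) := by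
  have hVT : IsUnit Vᵀ.det := by rwa [det_transpose]
  simp only [parityMatrix, Matrix.mul_add, Matrix.mul_smul, transpose_mul, transpose_transpose,
    Matrix.mul_assoc, mul_nonsing_inv_cancel_left _ _ hVT]

theorem parityMatrix_apply (V P X : Matrix n n R) (δ ε : R) (idx i : n) :
    parityMatrix V P X δ ε idx i =
      δ * ∑ ℓ, ((V * P)ᵀ * X) i ℓ * (Vᵀ)⁻¹ idx ℓ + ε * (X * P) idx i := by
  simp only [parityMatrix, Matrix.add_apply, Matrix.smul_apply, smul_eq_mul, Matrix.mul_assoc,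
    mul_apply (M := (Vᵀ)⁻¹), transpose_mul_transpose_apply, mul_comm]

end Parity

theorem parityMatrix_apply_eq_repair {n F : Type*} [Fintype n] [DecidableEq n] [Field F]
    {V P X Y : Matrix n n F} (hV : IsUnit V.det) (hP : IsUnit P.det) {δ ε : F} (hδ : δ ≠ 0)
    (hY : Y = parityMatrix V P X δ ε) {S : Finset n} {i : n} (hi : i ∈ S) (idx : n) :
    Y idx i =
      δ * (∑ ℓ, ((V * P)ᵀ * X) i ℓ * (Vᵀ)⁻¹ idx ℓ) +
      ε * (∑ ℓ, P ℓ i * ((V * P)ᵀ * X) i ℓ) * ((V * P)ᵀ)⁻¹ idx i +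
      ε * (∑ j ∈ S.erase i, ((V * P)ᵀ * (X * P)) j i * ((V * P)ᵀ)⁻¹ idx j) +
      (ε / δ) * (∑ j ∈ Sᶜ,
        (((V * P)ᵀ * Y) i j - ε * ∑ ℓ, P ℓ j * ((V * P)ᵀ * X) i ℓ) * ((V * P)ᵀ)⁻¹ idx j) := by
  have hUT : IsUnit (V * P)ᵀ.det := by rw [det_transpose, det_mul]; exact hV.mul hP
  have hXP : (X * P) idx i =
      (∑ ℓ, P ℓ i * ((V * P)ᵀ * X) i ℓ) * ((V * P)ᵀ)⁻¹ idx i +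
      (∑ j ∈ S.erase i, ((V * P)ᵀ * (X * P)) j i * ((V * P)ᵀ)⁻¹ idx j) +
      ∑ j ∈ Sᶜ, ((V * P)ᵀ * (X * P)) j i * ((V * P)ᵀ)⁻¹ idx j :=
    calc (X * P) idx i = (((V * P)ᵀ)⁻¹ * ((V * P)ᵀ * (X * P))) idx i := by
          rw [nonsing_inv_mul_cancel_left _ _ hUT]
      _ = ∑ j, ((V * P)ᵀ * (X * P)) j i * ((V * P)ᵀ)⁻¹ idx j := by
          simp only [mul_apply (M := ((V * P)ᵀ)⁻¹), mul_comm]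
      _ = _ := by rw [← sum_add_sum_compl S, ← add_sum_erase S _ hi, transpose_mul_mul_apply]
  have hrecover : ∀ j, ((V * P)ᵀ * Y) i j - ε * ∑ ℓ, P ℓ j * ((V * P)ᵀ * X) i ℓ =
      δ * ((V * P)ᵀ * (X * P)) j i := by
    intro j
    rw [hY, transpose_mul_parityMatrix hV, ← transpose_mul_mul_apply]
    simp only [Matrix.add_apply, Matrix.smul_apply, smul_eq_mul, transpose_apply]
    ring
  rw [hY, parityMatrix_apply, ← hY, hXP]
  simp only [hrecover, mul_assoc, ← mul_sum]
  field_simp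
  ring

theorem parity_repair_identity_general
    {F : Type*} [Field F] {k : ℕ}
    (V P : Matrix (Fin k) (Fin k) F)
    (hV : IsUnit V.det) (hP : IsUnit P.det)
    (X : Matrix (Fin k) (Fin k) F) (δ ε : F) (hδ : δ ≠ 0)
    (Y : Matrix (Fin k) (Fin k) F)
    (hY : Y = δ • ((Vᵀ)⁻¹ * Xᵀ * (V * P)) + ε • (X * P))
    (z : Fin k → Fin k → F)
    (hz : ∀ i idx, z i idx = ∑ ℓ, P ℓ i * X idx ℓ)
    (r : ℕ) :
    ∀ i : Fin k, (i : ℕ) < r →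
      (fun idx => Y idx i) =
      (fun idx =>
        δ * (∑ ℓ, ((fun t => (V * P) t i) ⬝ᵥ (fun t => X t ℓ)) * (Vᵀ)⁻¹ idx ℓ) +
        ε * (∑ ℓ, P ℓ i * ((fun t => (V * P) t i) ⬝ᵥ (fun t => X t ℓ))) *
          ((V * P)ᵀ)⁻¹ idx i +
        ε * (∑ j ∈ univ.filter (fun j : Fin k => (j : ℕ) < r ∧ j ≠ i),
          ((fun t => (V * P) t j) ⬝ᵥ z i) * ((V * P)ᵀ)⁻¹ idx j) +
        (ε / δ) * (∑ j ∈ univ.filter (fun j : Fin k => r ≤ (j : ℕ)),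
          (((fun t => (V * P) t i) ⬝ᵥ (fun t => Y t j)) -
            ε * ∑ ℓ, P ℓ j * ((fun t => (V * P) t i) ⬝ᵥ (fun t => X t ℓ))) *
          ((V * P)ᵀ)⁻¹ idx j)) := by
  intro i hi
  have hzi : z i = fun t => (X * P) t i := by
    funext t
    rw [hz, mul_apply]
    simp only [mul_comm]
  set S := univ.filter (fun j : Fin k => (j : ℕ) < r)
  have hnear : univ.filter (fun j : Fin k => (j : ℕ) < r ∧ j ≠ i) = S.erase i := by
    ext j; simp [S, and_comm]
  have hfar : univ.filter (fun j : Fin k => r ≤ (j : ℕ)) = Sᶜ := by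
    ext j; simp [S]
  funext idx
  simp only [hzi, col_dotProduct_col, hnear, hfar]
  exact parityMatrix_apply_eq_repair hV hP hδ hY (by simpa [S] using hi) idx

/-- Correctness of cooperative repair of the parity-check nodes
`k+1,…,k+r`: the lost parity vector `y_i` (for `i ≤ r`) is exactly
`δ ∑_ℓ (u_iᵗx_ℓ) v̂_ℓ + ε (∑_ℓ p_{ℓi}(u_iᵗx_ℓ)) û_i + ε ∑_{j∈{1,…,r}∖{i}} (u_jᵗz_i) û_j
 + (ε/δ) ∑_{j=r+1}^k ((u_iᵗy_j) − ε ∑_ℓ p_{ℓj}(u_iᵗx_ℓ)) û_j`. -/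
theorem parity_repair_identity
    {F : Type*} [Field F] {k : ℕ}
    (V P : Matrix (Fin k) (Fin k) F)
    (hV : IsUnit V.det) (hP : IsUnit P.det)
    (X : Matrix (Fin k) (Fin k) F) (δ ε : F) (hδ : δ ≠ 0)
    (Y : Matrix (Fin k) (Fin k) F)
    (hY : Y = δ • ((Vᵀ)⁻¹ * Xᵀ * (V * P)) + ε • (X * P))
    (z : Fin k → Fin k → F)
    (hz : ∀ i idx, z i idx = ∑ ℓ, P ℓ i * X idx ℓ)
    (r : ℕ) (hr1 : 1 ≤ r) (hrk : r ≤ k) :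
    ∀ i : Fin k, (i : ℕ) < r →
      (fun idx => Y idx i) =
      (fun idx =>
        δ * (∑ ℓ, ((fun t => (V * P) t i) ⬝ᵥ (fun t => X t ℓ)) * (Vᵀ)⁻¹ idx ℓ) +
        ε * (∑ ℓ, P ℓ i * ((fun t => (V * P) t i) ⬝ᵥ (fun t => X t ℓ))) *
          ((V * P)ᵀ)⁻¹ idx i +
        ε * (∑ j ∈ univ.filter (fun j : Fin k => (j : ℕ) < r ∧ j ≠ i),
          ((fun t => (V * P) t j) ⬝ᵥ z i) * ((V * P)ᵀ)⁻¹ idx j) +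
        (ε / δ) * (∑ j ∈ univ.filter (fun j : Fin k => r ≤ (j : ℕ)),
          (((fun t => (V * P) t i) ⬝ᵥ (fun t => Y t j)) -
            ε * ∑ ℓ, P ℓ j * ((fun t => (V * P) t i) ⬝ᵥ (fun t => X t ℓ))) *
          ((V * P)ᵀ)⁻¹ idx j)) :=
  parity_repair_identity_general V P hV hP X δ ε hδ Y hY z hz r
end
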